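/- The graph of the translation function gtr : GExp⁻ → StExp is a bisimulation of labelled transition systems between grph_*(GExp⁻, ∂) and (StExp, τ); consequently, two skip-free GKAT expressions are bisimilar iff their translations are bisimilar one-free star expressions. -/

import Mathlib

variable {At : Type} {Act : Type} {X : Type} {Y : Type} {Z : Type}

/-- Skip-free GKAT expressions; tests are represented as Boolean predicates on atoms. -/
inductive GExp (At Act : Type) : Type
  | zero : GExp At Act
  | act : Act → GExp At Act
  | add : (At → Bool) → GExp At Act → GExp At Act → GExp At Act
  | seq : GExp At Act → GExp At Act → GExp At Act
  | loop : (At → Bool) → GExp At Act → GExp At Act → GExp At Act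

/-- The Brzozowski-style small-step semantics (derivative) of skip-free GKAT expressions.
`none` is the failure output ⊥, `some (p, none)` is acceptance with action `p`,
and `some (p, some e')` is a transition to `e'` with action `p`. -/
def gderiv : GExp At Act → At → Option (Act × Option (GExp At Act))
  | .zero, _ => none
  | .act p, _ => some (p, none)
  | .add b e f, α => if b α then gderiv e α else gderiv f α
  | .seq e f, α =>
      match gderiv e α with
      | none => none
      | some (p, none) => some (p, some f)
      | some (p, some e') => some (p, some (.seq e' f))
  | .loop b e f, α =>
      if b α then
        match gderiv e α with
        | none => none
        | some (p, none) => some (p, some (.loop b e f))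
        | some (p, some e') => some (p, some (.seq e' (.loop b e f)))
      else gderiv f α

/-- A skip-free automaton structure on `X`. -/
abbrev SFA (At Act X : Type) := X → At → Option (Act × Option X)

/-- Acceptance of a guarded trace (a nonempty list of atom/action pairs) from a state. -/
inductive Accepts (h : SFA At Act X) : X → List (At × Act) → Prop
  | last {x α p} : h x α = some (p, none) → Accepts h x [(α, p)]
  | step {x α p x' w} : h x α = some (p, some x') → Accepts h x' w →
      Accepts h x ((α, p) :: w)

/-- The language of guarded traces accepted by a state of a skip-free automaton. -/
def Lang (h : SFA At Act X) (x : X) : Set (List (At × Act)) := {w | Accepts h x w}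

/-- Bisimulations between skip-free automata. -/
def IsSFBisim (h : SFA At Act X) (k : SFA At Act Y) (R : X → Y → Prop) : Prop :=
  ∀ ⦃x y⦄, R x y → ∀ α : At,
    (h x α = none ↔ k y α = none) ∧
    (∀ p : Act, h x α = some (p, none) ↔ k y α = some (p, none)) ∧
    (∀ (p : Act) (x' : X), h x α = some (p, some x') →
      ∃ y' : Y, k y α = some (p, some y') ∧ R x' y')

/-- Bisimilarity of states of skip-free automata. -/
def SFBisimilar (h : SFA At Act X) (k : SFA At Act Y) (x : X) (y : Y) : Prop :=
  ∃ R, IsSFBisim h k R ∧ R x y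

/-- A labelled transition system over labels `At × Act` with termination `✓` (`none`). -/
abbrev LTS (At Act X : Type) := X → Set ((At × Act) × Option X)

/-- Bisimulations between labelled transition systems. -/
def IsLTSBisim (t : LTS At Act X) (u : LTS At Act Y) (R : X → Y → Prop) : Prop :=
  ∀ ⦃x y⦄, R x y → ∀ a : At × Act,
    ((a, (none : Option X)) ∈ t x ↔ (a, (none : Option Y)) ∈ u y) ∧
    (∀ x' : X, (a, some x') ∈ t x → ∃ y' : Y, (a, some y') ∈ u y ∧ R x' y') ∧
    (∀ y' : Y, (a, some y') ∈ u y → ∃ x' : X, (a, some x') ∈ t x ∧ R x' y')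

/-- Bisimilarity of states of labelled transition systems. -/
def LTSBisimilar (t : LTS At Act X) (u : LTS At Act Y) (x : X) (y : Y) : Prop :=
  ∃ R, IsLTSBisim t u R ∧ R x y

/-- The transformation of a skip-free automaton into a labelled transition system. -/
def grph (h : SFA At Act X) : LTS At Act X :=
  fun x => {z | h x z.1.1 = some (z.1.2, z.2)}

/-- A set of labelled transitions is graph-like if it assigns at most one outcome per atom. -/
def GraphLike (U : Set ((At × Act) × Option X)) : Prop :=
  ∀ (α : At) (p q : Act) (ξ ζ : Option X),
    ((α, p), ξ) ∈ U → ((α, q), ζ) ∈ U → p = q ∧ ξ = ζ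

/-- One-free star expressions over the alphabet `At · Act`. -/
inductive StExp (At Act : Type) : Type
  | zero : StExp At Act
  | atom : At → Act → StExp At Act
  | add : StExp At Act → StExp At Act → StExp At Act
  | seq : StExp At Act → StExp At Act → StExp At Act
  | star : StExp At Act → StExp At Act → StExp At Act

/-- The small-step labelled transition system of one-free star expressions. -/
def tau : LTS At Act (StExp At Act)
  | .zero => ∅
  | .atom α p => {((α, p), none)}
  | .add r s => tau r ∪ tau s
  | .seq r s =>
      {z | ∃ a r', (a, some r') ∈ tau r ∧ z = (a, some (StExp.seq r' s))} ∪
      {z | ∃ a, (a, none) ∈ tau r ∧ z = (a, some s)}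
  | .star r s =>
      {z | ∃ a r', (a, some r') ∈ tau r ∧ z = (a, some (StExp.seq r' (StExp.star r s)))} ∪
      {z | ∃ a, (a, none) ∈ tau r ∧ z = (a, some (StExp.star r s))} ∪
      tau s

/-- Restriction `b · r` of a one-free star expression to initial atoms satisfying `b`. -/
def bdot (b : At → Bool) : StExp At Act → StExp At Act
  | .zero => .zero
  | .atom α p => if b α then .atom α p else .zero
  | .add r s => .add (bdot b r) (bdot b s)
  | .seq r s => .seq (bdot b r) s
  | .star r s => .add (.seq (bdot b r) (.star r s)) (bdot b s)

/-- Sum of a list of one-free star expressions. -/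
def sumList : List (StExp At Act) → StExp At Act
  | [] => .zero
  | r :: rs => .add r (sumList rs)

/-- The translation of skip-free GKAT expressions into one-free star expressions. -/
noncomputable def gtr [Fintype At] : GExp At Act → StExp At Act
  | .zero => .zero
  | .act p => sumList (((Finset.univ : Finset At).toList).map fun α => .atom α p)
  | .add b e f => .add (bdot b (gtr e)) (bdot (fun α => !b α) (gtr f))
  | .seq e f => .seq (gtr e) (gtr f)
  | .loop b e f => .star (bdot b (gtr e)) (bdot (fun α => !b α) (gtr f))

/-!
The translation is a functional bisimulation: by induction on `e`, the `τ`-transitions of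
`gtr e` are exactly the images under `gtr` of the derivative of `e`. In the guarded cases the
restrictions `b · _` and `b̄ · _` leave disjoint sets of initial atoms, so the transitions of the
sum are those of the branch selected by `b α`. The graph of a functional bisimulation is a
bisimulation, and functional bisimulations both push bisimulations forward (by images) and pull
them back (by preimages), so they preserve and reflect bisimilarity.
-/

/-- Functional bisimulations, i.e. homomorphisms of labelled transition systems. -/
def IsLTSHom (t : LTS At Act X) (u : LTS At Act Y) (f : X → Y) : Prop :=
  ∀ x a ζ, (a, ζ) ∈ u (f x) ↔ ∃ ξ, (a, ξ) ∈ t x ∧ ζ = ξ.map f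

namespace IsLTSHom

variable {X' Y' : Type} {t : LTS At Act X} {u : LTS At Act Y} {f : X → Y}
  {t' : LTS At Act X'} {u' : LTS At Act Y'} {g : X' → Y'}

lemma mem_none_iff (hf : IsLTSHom t u f) {x : X} {a : At × Act} :
    (a, none) ∈ u (f x) ↔ (a, none) ∈ t x := by
  simp [hf x]

lemma map_mem_some (hf : IsLTSHom t u f) {x x' : X} {a : At × Act} (h : (a, some x') ∈ t x) :
    (a, some (f x')) ∈ u (f x) :=
  (hf x a _).2 ⟨some x', h, rfl⟩

lemma exists_of_mem_some (hf : IsLTSHom t u f) {x : X} {y' : Y} {a : At × Act}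
    (h : (a, some y') ∈ u (f x)) : ∃ x', (a, some x') ∈ t x ∧ y' = f x' := by
  obtain ⟨_ | x', hx', hy'⟩ := (hf x a _).1 h
  · cases hy'
  · exact ⟨x', hx', Option.some_injective _ hy'⟩

lemma isLTSBisim_graph (hf : IsLTSHom t u f) : IsLTSBisim t u (fun x y => y = f x) := by
  rintro x _ rfl a
  refine ⟨hf.mem_none_iff.symm, fun x' hx' => ⟨f x', hf.map_mem_some hx', rfl⟩, fun y' hy' => ?_⟩
  obtain ⟨x', hx', rfl⟩ := hf.exists_of_mem_some hy'
  exact ⟨x', hx', rfl⟩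

lemma isLTSBisim_image (hf : IsLTSHom t u f) (hg : IsLTSHom t' u' g) {R : X → X' → Prop}
    (hR : IsLTSBisim t t' R) :
    IsLTSBisim u u' (fun y y' => ∃ x x', y = f x ∧ y' = g x' ∧ R x x') := by
  rintro _ _ ⟨x, x', rfl, rfl, hxx'⟩ a
  obtain ⟨hnone, hfwd, hbwd⟩ := hR hxx' a
  refine ⟨by rw [hf.mem_none_iff, hg.mem_none_iff, hnone], fun y₁ hy₁ => ?_, fun y₁' hy₁' => ?_⟩
  · obtain ⟨x₁, hx₁, rfl⟩ := hf.exists_of_mem_some hy₁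
    obtain ⟨x₁', hx₁', hR₁⟩ := hfwd x₁ hx₁
    exact ⟨g x₁', hg.map_mem_some hx₁', x₁, x₁', rfl, rfl, hR₁⟩
  · obtain ⟨x₁', hx₁', rfl⟩ := hg.exists_of_mem_some hy₁'
    obtain ⟨x₁, hx₁, hR₁⟩ := hbwd x₁' hx₁'
    exact ⟨f x₁, hf.map_mem_some hx₁, x₁, x₁', rfl, rfl, hR₁⟩

lemma isLTSBisim_preimage (hf : IsLTSHom t u f) (hg : IsLTSHom t' u' g) {S : Y → Y' → Prop}
    (hS : IsLTSBisim u u' S) : IsLTSBisim t t' (fun x x' => S (f x) (g x')) := by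
  intro x x' hxx' a
  obtain ⟨hnone, hfwd, hbwd⟩ := hS hxx' a
  refine ⟨by rw [← hf.mem_none_iff, ← hg.mem_none_iff, hnone], fun x₁ hx₁ => ?_, fun x₁' hx₁' => ?_⟩
  · obtain ⟨y₁', hy₁', hS₁⟩ := hfwd _ (hf.map_mem_some hx₁)
    obtain ⟨x₁', hx₁', rfl⟩ := hg.exists_of_mem_some hy₁'
    exact ⟨x₁', hx₁', hS₁⟩
  · obtain ⟨y₁, hy₁, hS₁⟩ := hbwd _ (hg.map_mem_some hx₁')
    obtain ⟨x₁, hx₁, rfl⟩ := hf.exists_of_mem_some hy₁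
    exact ⟨x₁, hx₁, hS₁⟩

lemma ltsBisimilar_iff (hf : IsLTSHom t u f) (hg : IsLTSHom t' u' g) {x : X} {x' : X'} :
    LTSBisimilar u u' (f x) (g x') ↔ LTSBisimilar t t' x x' :=
  ⟨fun ⟨_, hS, hxx'⟩ => ⟨_, hf.isLTSBisim_preimage hg hS, hxx'⟩,
    fun ⟨_, hR, hxx'⟩ => ⟨_, hf.isLTSBisim_image hg hR, x, x', rfl, rfl, hxx'⟩⟩

end IsLTSHom

namespace StExp

lemma mem_tau_bdot {b : At → Bool} {r : StExp At Act} {z : (At × Act) × Option (StExp At Act)} :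
    z ∈ tau (bdot b r) ↔ z ∈ tau r ∧ b z.1.1 = true := by
  induction r generalizing z with
  | zero => simp [bdot, tau]
  | atom α p => by_cases h : b α <;> aesop (add simp [bdot, tau])
  | add r s ihr ihs => simp only [bdot, tau, Set.mem_union, ihr, ihs]; tauto
  | seq r s ihr => simp only [bdot, tau, Set.mem_union, ihr]; aesop
  | star r s ihr ihs => simp only [bdot, tau, Set.mem_union, ihr, ihs]; aesop

lemma mem_tau_sumList {l : List (StExp At Act)} {z : (At × Act) × Option (StExp At Act)} :
    z ∈ tau (sumList l) ↔ ∃ r ∈ l, z ∈ tau r := by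
  induction l with
  | nil => simp [sumList, tau]
  | cons r rs ih => simp [sumList, tau, ih]

lemma mem_tau_seq {r s : StExp At Act} {a : At × Act} {ζ : Option (StExp At Act)} :
    (a, ζ) ∈ tau (.seq r s) ↔ ∃ ξ, (a, ξ) ∈ tau r ∧ ζ = some (ξ.elim s (·.seq s)) := by
  constructor
  · rintro (⟨a, r', h, ⟨⟩⟩ | ⟨a, h, ⟨⟩⟩)
    exacts [⟨some r', h, rfl⟩, ⟨none, h, rfl⟩]
  · rintro ⟨_ | r', h, rfl⟩
    exacts [Or.inr ⟨a, h, rfl⟩, Or.inl ⟨a, r', h, rfl⟩]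

lemma mem_tau_star {r s : StExp At Act} {a : At × Act} {ζ : Option (StExp At Act)} :
    (a, ζ) ∈ tau (.star r s) ↔
      (∃ ξ, (a, ξ) ∈ tau r ∧ ζ = some (ξ.elim (.star r s) (·.seq (.star r s)))) ∨
        (a, ζ) ∈ tau s := by
  rw [tau, Set.mem_union, ← mem_tau_seq (s := .star r s)]
  rfl

end StExp

open StExp

lemma mem_tau_gtr [Fintype At] (e : GExp At Act) (α : At) (p : Act)
    (ζ : Option (StExp At Act)) :
    ((α, p), ζ) ∈ tau (gtr e) ↔ ∃ ξ, gderiv e α = some (p, ξ) ∧ ζ = ξ.map gtr := by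
  induction e generalizing ζ with
  | zero => simp [gtr, tau, gderiv]
  | act q => simp [gtr, mem_tau_sumList, gderiv, tau, eq_comm]
  | add b e f ihe ihf => by_cases h : b α <;> simp [gtr, tau, mem_tau_bdot, gderiv, h, ihe, ihf]
  | seq e f ihe =>
    rcases h : gderiv e α with _ | ⟨q, _ | e'⟩ <;> simp [gtr, mem_tau_seq, gderiv, ihe, h]
  | loop b e f ihe ihf =>
    by_cases hb : b α
    · rcases h : gderiv e α with _ | ⟨q, _ | e'⟩ <;>
        simp [gtr, mem_tau_star, mem_tau_bdot, gderiv, ihe, h, hb]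
    · simp [gtr, mem_tau_star, mem_tau_bdot, gderiv, ihf, hb]

lemma isLTSHom_gtr [Fintype At] : IsLTSHom (grph (gderiv (At := At) (Act := Act))) tau gtr :=
  fun e a ζ => mem_tau_gtr e a.1 a.2 ζ

theorem gtr_graph_bisim [Fintype At] :
    IsLTSBisim (grph (gderiv (At := At) (Act := Act))) tau (fun e r => r = gtr e) ∧
    (∀ e₁ e₂ : GExp At Act,
      LTSBisimilar (grph gderiv) (grph gderiv) e₁ e₂ ↔
        LTSBisimilar tau tau (gtr e₁) (gtr e₂)) :=
  ⟨isLTSHom_gtr.isLTSBisim_graph, fun _ _ => (isLTSHom_gtr.ltsBisimilar_iff isLTSHom_gtr).symm⟩
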